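/- Explicit kernel difference formula, main case: with K_l as the square-operator kernel, x₀ ∈ ℝ, integers i < j, |x - x₀| < 2^i, x > x₀, and y in the annulus (x₀ - 2^{j+1}, x₀ - 2^j) ∪ (x₀ + 2^j, x₀ + 2^{j+1}), one has |K_j(y-x) - K_j(y-x₀)| = (1/2^{j+1}) χ_{(x - 2^j, x₀ - 2^j) ∪ (x₀ + 2^j, x + 2^j)}(y). -/
import Mathlib


open Set

/-- The `l`-th component of the kernel of the (two-sided) square operator:
`K_l(z) = 2^{-(l+1)} χ_{(-2^l, 2^l)}(z) - 2^{-l} χ_{(-2^{l-1}, 2^{l-1})}(z)`. -/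
noncomputable def sqK (l : ℤ) (z : ℝ) : ℝ :=
  (2 : ℝ) ^ (-(l + 1)) * (Ioo (-(2 : ℝ) ^ l) ((2 : ℝ) ^ l)).indicator (fun _ => (1 : ℝ)) z -
    (2 : ℝ) ^ (-l) * (Ioo (-(2 : ℝ) ^ (l - 1)) ((2 : ℝ) ^ (l - 1))).indicator (fun _ => (1 : ℝ)) z

/-- Explicit kernel difference formula, main case (`l = j`, `x > x₀`): under the
hypotheses of Proposition A,
`|K_j(y-x) - K_j(y-x₀)| = 2^{-(j+1)} χ_{(x-2^j, x₀-2^j) ∪ (x₀+2^j, x+2^j)}(y)`. -/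
theorem stmt_14 (x₀ : ℝ) (i j : ℤ) (hij : i < j) (x y : ℝ)
    (hx : |x - x₀| < (2 : ℝ) ^ i) (hxx₀ : x₀ < x)
    (hy : y ∈ Ioo (x₀ - (2 : ℝ) ^ (j + 1)) (x₀ - (2 : ℝ) ^ j) ∪
          Ioo (x₀ + (2 : ℝ) ^ j) (x₀ + (2 : ℝ) ^ (j + 1))) :
    |sqK j (y - x) - sqK j (y - x₀)| =
      (2 : ℝ) ^ (-(j + 1)) *
        (Ioo (x - (2 : ℝ) ^ j) (x₀ - (2 : ℝ) ^ j) ∪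
          Ioo (x₀ + (2 : ℝ) ^ j) (x + (2 : ℝ) ^ j)).indicator (fun _ => (1 : ℝ)) y := by
  have h2ne : (2 : ℝ) ≠ 0 := by norm_num
  have hmono : (2 : ℝ) ^ i ≤ (2 : ℝ) ^ (j - 1) :=
    zpow_le_zpow_right₀ one_le_two (by omega)
  have hjj : (2 : ℝ) ^ (j - 1) * 2 = (2 : ℝ) ^ j := by
    rw [mul_comm, ← zpow_one_add₀ h2ne]; norm_num
  have hpos : (0 : ℝ) < (2 : ℝ) ^ (j - 1) := zpow_pos two_pos _
  have habs := abs_lt.mp hx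
  -- the small indicators vanish
  have hsmall₀ : (Ioo (-(2 : ℝ) ^ (j - 1)) ((2 : ℝ) ^ (j - 1))).indicator
      (fun _ => (1 : ℝ)) (y - x₀) = 0 := by
    apply indicator_of_notMem
    simp only [mem_Ioo, not_and_or, not_lt]
    rcases hy with h | h
    · left; linarith [h.2]
    · right; linarith [h.1]
  have hsmall : (Ioo (-(2 : ℝ) ^ (j - 1)) ((2 : ℝ) ^ (j - 1))).indicator
      (fun _ => (1 : ℝ)) (y - x) = 0 := by
    apply indicator_of_notMem
    simp only [mem_Ioo, not_and_or, not_lt]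
    rcases hy with h | h
    · left; linarith [h.2]
    · right; linarith [h.1, habs.2]
  -- the big indicator at y - x₀ vanishes
  have hbig₀ : (Ioo (-(2 : ℝ) ^ j) ((2 : ℝ) ^ j)).indicator
      (fun _ => (1 : ℝ)) (y - x₀) = 0 := by
    apply indicator_of_notMem
    simp only [mem_Ioo, not_and_or, not_lt]
    rcases hy with h | h
    · left; linarith [h.2]
    · right; linarith [h.1]
  -- the big indicator at y - x equals the union indicator at y
  have key : (Ioo (-(2 : ℝ) ^ j) ((2 : ℝ) ^ j)).indicator (fun _ => (1 : ℝ)) (y - x) =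
      (Ioo (x - (2 : ℝ) ^ j) (x₀ - (2 : ℝ) ^ j) ∪
        Ioo (x₀ + (2 : ℝ) ^ j) (x + (2 : ℝ) ^ j)).indicator (fun _ => (1 : ℝ)) y := by
    by_cases h : y - x ∈ Ioo (-(2 : ℝ) ^ j) ((2 : ℝ) ^ j)
    · rw [indicator_of_mem h, indicator_of_mem]
      rcases hy with h' | h'
      · exact Or.inl ⟨by linarith [h.1], h'.2⟩
      · exact Or.inr ⟨h'.1, by linarith [h.2]⟩
    · rw [indicator_of_notMem h, indicator_of_notMem]
      intro hm
      apply h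
      rcases hm with hm | hm
      · exact ⟨by linarith [hm.1], by linarith [hm.2]⟩
      · exact ⟨by linarith [hm.1, habs.2], by linarith [hm.2]⟩
  rw [sqK, sqK, hsmall₀, hsmall, hbig₀, key]
  simp only [mul_zero, sub_zero]
  exact abs_of_nonneg (mul_nonneg (zpow_pos two_pos _).le
    (indicator_nonneg (fun _ _ => zero_le_one) _))
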